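/- Let N, n, j, m be positive integers, R a nonempty finite type with cardinality r = |R|, H : R → ZMod N a function, P : Fin n → Fin j a surjection, M : Matrix (Fin j) (Fin m) (ZMod N) a matrix, and e : ZMod N → ℂ the standard additive character e(a) = exp(2πi·a.val/N). For s : Fin m → ZMod N, let φ_s : (Fin n → R) → ℂ be φ_s(x) = r^{-n/2} · e(∑_{i : Fin n} H(x i) * (∑_{t : Fin m} M (P i) t * s t)). For x : Fin n → R define ρ(x) : Fin j → ZMod N by ρ(x)(k) = ∑_{i : P i = k} H(x i). For y : Fin m → ZMod N, let u_y : (Fin n → R) → ℂ be the indicator vector with u_y(x) = 1 if Mᵀ.mulVec (ρ(x)) = y and u_y(x) = 0 otherwise. Then (1/N^m) · ∑_{s : Fin m → ZMod N} φ_s · (φ_s)† = r^{-n} · ∑_{y : Fin m → ZMod N} u_y · (u_y)† as matrices indexed by (Fin n → R) × (Fin n → R). -/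
import Mathlib

open Complex

/-- The standard additive character of `ZMod N`: `e(a) = exp(2πi·a.val/N)`. -/
noncomputable def stdChar (N : ℕ) (a : ZMod N) : ℂ :=
  Complex.exp (2 * Real.pi * Complex.I * (a.val : ℂ) / (N : ℂ))

lemma stdChar_eq (N : ℕ) [NeZero N] (a : ZMod N) : stdChar N a = ZMod.stdAddChar a := by
  rw [ZMod.stdAddChar_apply, ZMod.toCircle_apply, stdChar]

lemma stdChar_conj (N : ℕ) [NeZero N] (a : ZMod N) :
    (starRingEnd ℂ) (stdChar N a) = stdChar N (-a) := by
  rw [stdChar_eq, stdChar_eq, ZMod.stdAddChar_apply, ZMod.stdAddChar_apply,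
    AddChar.map_neg_eq_inv, ← Circle.coe_inv_eq_conj, Circle.coe_inv]

lemma addChar_sum {A M : Type*} [AddCommMonoid A] [CommMonoid M] (ψ : AddChar A M)
    {ι : Type*} (s : Finset ι) (g : ι → A) :
    ψ (∑ i ∈ s, g i) = ∏ i ∈ s, ψ (g i) := by
  induction s using Finset.cons_induction with
  | empty => simp
  | cons a s ha ih => rw [Finset.sum_cons, Finset.prod_cons, ψ.map_add_eq_mul, ih]

lemma stdChar_sum_single (N : ℕ) [NeZero N] (c : ZMod N) :
    ∑ z : ZMod N, stdChar N (c * z) = if c = 0 then (N : ℂ) else 0 := by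
  simp only [stdChar_eq]
  split_ifs with h
  · simp [h, AddChar.map_zero_eq_one, ZMod.card]
  · exact AddChar.sum_eq_zero_of_ne_one (ZMod.isPrimitive_stdAddChar N h)

theorem density_matrix_lemma_b1 (N n j m : ℕ)
    (hN : 0 < N) [NeZero N] (hn : 0 < n) (hj : 0 < j) (hm : 0 < m)
    (R : Type) [Fintype R] [Nonempty R] (H : R → ZMod N)
    (P : Fin n → Fin j) (hP : Function.Surjective P)
    (M : Matrix (Fin j) (Fin m) (ZMod N))
    (φ : (Fin m → ZMod N) → (Fin n → R) → ℂ)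
    (hφ : ∀ s x, φ s x =
      ((Real.sqrt ((Fintype.card R : ℝ) ^ n))⁻¹ : ℂ) *
        stdChar N (∑ i, H (x i) * (∑ t, M (P i) t * s t)))
    (ρ : (Fin n → R) → Fin j → ZMod N)
    (hρ : ∀ x k, ρ x k = ∑ i ∈ Finset.univ.filter (fun i => P i = k), H (x i))
    (u : (Fin m → ZMod N) → (Fin n → R) → ℂ)
    (hu : ∀ y x, u y x = if M.transpose.mulVec (ρ x) = y then 1 else 0) :
    ((1 / (N : ℂ) ^ m) •
        ∑ s : Fin m → ZMod N,
          Matrix.of fun x x' : Fin n → R => φ s x * (starRingEnd ℂ) (φ s x')) =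
      ((Fintype.card R : ℂ) ^ n)⁻¹ •
        ∑ y : Fin m → ZMod N,
          Matrix.of fun x x' : Fin n → R => u y x * (starRingEnd ℂ) (u y x') := by
  set c : ℂ := ((Real.sqrt ((Fintype.card R : ℝ) ^ n))⁻¹ : ℂ) with hc
  -- exponent rewrite
  have key : ∀ (x : Fin n → R) (s : Fin m → ZMod N),
      (∑ i, H (x i) * (∑ t, M (P i) t * s t)) =
        ∑ t, M.transpose.mulVec (ρ x) t * s t := by
    intro x s
    simp only [Matrix.mulVec, Matrix.transpose_apply, dotProduct, hρ]
    calc ∑ i, H (x i) * ∑ t, M (P i) t * s t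
        = ∑ t, ∑ i, H (x i) * (M (P i) t * s t) := by
          simp_rw [Finset.mul_sum]; exact Finset.sum_comm
      _ = ∑ t, (∑ k, M k t * ∑ i ∈ Finset.univ.filter (fun i => P i = k), H (x i)) * s t := by
          refine Finset.sum_congr rfl fun t _ => ?_
          rw [← Finset.sum_fiberwise Finset.univ P (fun i => H (x i) * (M (P i) t * s t)),
            Finset.sum_mul]
          refine Finset.sum_congr rfl fun k _ => ?_
          rw [Finset.mul_sum, Finset.sum_mul]
          exact Finset.sum_congr rfl fun i hi => by
            rw [(Finset.mem_filter.mp hi).2]; ring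
  -- now entrywise
  ext x x'
  simp only [Matrix.smul_apply, Matrix.sum_apply, Matrix.of_apply, smul_eq_mul]
  set v : (Fin n → R) → Fin m → ZMod N := fun x => M.transpose.mulVec (ρ x) with hv
  have conj_u : ∀ y z, (starRingEnd ℂ) (u y z) = u y z := by
    intro y z; rw [hu]; split_ifs <;> simp
  have hcc : c * c = ((Fintype.card R : ℂ) ^ n)⁻¹ := by
    rw [hc]
    rw [← ofReal_inv, ← ofReal_mul, ← mul_inv,
      Real.mul_self_sqrt (by positivity)]
    push_cast
    ring
  have lhs_sum : ∀ s : Fin m → ZMod N, φ s x * (starRingEnd ℂ) (φ s x') =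
      c * c * stdChar N (∑ t, (v x t - v x' t) * s t) := by
    intro s
    rw [hφ, hφ, key, key, map_mul, stdChar_conj]
    have : (starRingEnd ℂ) c = c := by rw [hc]; simp
    rw [this, stdChar_eq, stdChar_eq, stdChar_eq]
    have hexp : (∑ t, (v x t - v x' t) * s t) =
        (∑ t, v x t * s t) + -(∑ t, v x' t * s t) := by
      simp_rw [sub_mul]
      rw [Finset.sum_sub_distrib, sub_eq_add_neg]
    rw [hexp, AddChar.map_add_eq_mul]
    ring
  rw [Finset.sum_congr rfl fun s _ => lhs_sum s]
  rw [← Finset.mul_sum]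
  have char_sum : (∑ s : Fin m → ZMod N, stdChar N (∑ t, (v x t - v x' t) * s t)) =
      if v x = v x' then (N : ℂ) ^ m else 0 := by
    have : ∀ s : Fin m → ZMod N, stdChar N (∑ t, (v x t - v x' t) * s t) =
        ∏ t, stdChar N ((v x t - v x' t) * s t) := by
      intro s
      simp_rw [stdChar_eq]
      exact addChar_sum _ _ _
    simp_rw [this]
    rw [← Fintype.prod_sum (fun t z => stdChar N ((v x t - v x' t) * z))]
    simp_rw [stdChar_sum_single, sub_eq_zero]
    by_cases h : v x = v x'
    · simp [h, Finset.prod_ite_eq, funext_iff.mp h, Finset.card_univ]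
    · obtain ⟨t0, ht0⟩ := Function.ne_iff.mp h
      rw [if_neg h]
      exact Finset.prod_eq_zero (Finset.mem_univ t0) (by rw [if_neg ht0])
  rw [char_sum]
  -- RHS
  have rhs_sum : (∑ y : Fin m → ZMod N, u y x * (starRingEnd ℂ) (u y x')) =
      if v x = v x' then 1 else 0 := by
    simp_rw [conj_u, hu]
    show (∑ y : Fin m → ZMod N, (if v x = y then (1:ℂ) else 0) *
      if v x' = y then (1:ℂ) else 0) = _
    simp only [ite_mul, one_mul, zero_mul, mul_ite, mul_one, mul_zero]
    rw [Finset.sum_ite_eq (Finset.univ : Finset (Fin m → ZMod N)) (v x')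
      (fun y => if v x = y then (1:ℂ) else 0)]
    simp only [Finset.mem_univ, if_true]
  rw [rhs_sum]
  have hNm : ((N : ℂ) ^ m) ≠ 0 :=
    pow_ne_zero _ (Nat.cast_ne_zero.mpr hN.ne')
  rw [hcc]
  split_ifs with h
  · field_simp
  · simp
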